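/- Let r ≥ 2 and let a with 1 ≤ a < r and gcd(a,r) = 1. Define β(r,a) = k + 2 + Σ_{i=1}^{k}(2 - b_i) - (a + a' + 2)/r, where r/a = [b_1,...,b_k] is the Hirzebruch–Jung continued fraction expansion and a' is the unique integer with 1 ≤ a' < r and a·a' ≡ 1 (mod r). Then β(r,a) + β(r,r-a) = 4(1 - 1/r). -/

import Mathlib

/-- Evaluation of a Hirzebruch–Jung continued fraction `[b₁,…,b_k]` as
`b₁ - 1/(b₂ - 1/(⋯ - 1/b_k))`. -/
def hjEval : List ℚ → ℚ
  | [] => 0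
  | b :: rest => b - 1 / hjEval rest

/-- `b` is the Hirzebruch–Jung continued fraction expansion of `r/a`. -/
def IsHJExpansion (r a : ℕ) (b : List ℤ) : Prop :=
  b ≠ [] ∧ (∀ x ∈ b, 2 ≤ x) ∧ hjEval (b.map (fun x => (x : ℚ))) = (r : ℚ) / a

/-- `β(r,a) = k + 2 + Σ (2 - bᵢ) - (a + a' + 2)/r` for an HJ expansion `b` of
`r/a` of length `k`, and `a'` the inverse of `a` mod `r`. -/
noncomputable def betaT (r a a' : ℕ) (b : List ℤ) : ℚ :=
  (b.length : ℚ) + 2 + (b.map (fun x => 2 - (x : ℚ))).sum - ((a : ℚ) + a' + 2) / r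

/-!
The numbers `x = r/a` and `y = r/(r-a)` satisfy `1/x + 1/y = 1`, and for any such pair the
expansions `b` of `x` and `c` of `y` satisfy `Σ bᵢ + Σ cⱼ = 3 (k + l) - 2`. Indeed, if `x > 2`
then `y < 2`, so `c = 2 :: c'` with `c'` expanding `(2 - y)⁻¹`, which is dual to `x - 1`, while
lowering the first entry of `b` by one expands `x - 1`: both the sum and `3 (k + l)` drop by `3`.
The case `x < 2` is symmetric and `x = y = 2` forces `b = c = [2]`. Finally the inverse of
`r - a` modulo `r` is `r - a'`, so `a' + a'' = r`, and the identity is linear arithmetic.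
-/

def IsHJExpansionOf (x : ℚ) (b : List ℤ) : Prop :=
  b ≠ [] ∧ (∀ z ∈ b, 2 ≤ z) ∧ hjEval (b.map ((↑) : ℤ → ℚ)) = x

/- In `IsHJExpansion` and `betaT` the cast `(x : ℚ)` is elaborated by lifting it through the
list monad, whence the `bind_pure_comp` below. -/
theorem isHJExpansion_iff {r a : ℕ} {b : List ℤ} :
    IsHJExpansion r a b ↔ IsHJExpansionOf ((r : ℚ) / a) b := by
  simp only [IsHJExpansion, IsHJExpansionOf, bind_pure_comp, List.map_eq_map, List.map_id_fun',
    id_eq]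

namespace IsHJExpansionOf

variable {x : ℚ} {b t : List ℤ} {b₁ : ℤ}

theorem eq_of_singleton (h : IsHJExpansionOf x [b₁]) : x = b₁ := by
  simp [← h.2.2, hjEval]

theorem two_le_head (h : IsHJExpansionOf x (b₁ :: t)) : (2 : ℚ) ≤ b₁ := by
  exact_mod_cast h.2.1 b₁ List.mem_cons_self

theorem tail (h : IsHJExpansionOf x (b₁ :: t)) (ht : t ≠ []) :
    IsHJExpansionOf (b₁ - x)⁻¹ t := by
  obtain ⟨-, h2, rfl⟩ := h
  refine ⟨ht, fun z hz => h2 z (List.mem_cons_of_mem b₁ hz), ?_⟩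
  simp [hjEval]

theorem one_lt (h : IsHJExpansionOf x b) : 1 < x := by
  induction b generalizing x with
  | nil => exact absurd rfl h.1
  | cons b₁ t ih =>
    have hb₁ := h.two_le_head
    rcases eq_or_ne t [] with rfl | ht
    · linarith [h.eq_of_singleton]
    · linarith [(one_lt_inv_iff₀.1 (ih (h.tail ht))).2]

theorem head_sub_one_lt_of_ne_nil (h : IsHJExpansionOf x (b₁ :: t)) (ht : t ≠ []) :
    (b₁ : ℚ) - 1 < x ∧ x < b₁ := by
  obtain ⟨hpos, hlt⟩ := one_lt_inv_iff₀.1 (h.tail ht).one_lt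
  constructor <;> linarith

theorem eq_singleton_of_eq_intCast {m : ℤ} (h : IsHJExpansionOf m b) : b = [m] := by
  obtain ⟨b₁, t, rfl⟩ := List.exists_cons_of_ne_nil h.1
  rcases eq_or_ne t [] with rfl | ht
  · have : (m : ℚ) = b₁ := h.eq_of_singleton
    rw [show m = b₁ by exact_mod_cast this]
  · obtain ⟨hlo, hhi⟩ := h.head_sub_one_lt_of_ne_nil ht
    have : b₁ - 1 < m := by exact_mod_cast hlo
    have : m < b₁ := by exact_mod_cast hhi
    omega

theorem sub_one (hx : 2 < x) (h : IsHJExpansionOf x (b₁ :: t)) :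
    IsHJExpansionOf (x - 1) ((b₁ - 1) :: t) := by
  have hb₁ : 3 ≤ b₁ := by
    suffices (2 : ℚ) < b₁ by exact_mod_cast this
    rcases eq_or_ne t [] with rfl | ht
    · linarith [h.eq_of_singleton]
    · linarith [(h.head_sub_one_lt_of_ne_nil ht).2]
  obtain ⟨-, h2, rfl⟩ := h
  refine ⟨List.cons_ne_nil _ _, ?_, ?_⟩
  · rw [List.forall_mem_cons] at h2 ⊢
    exact ⟨by omega, h2.2⟩
  · simp only [List.map_cons, hjEval]
    push_cast
    ring

theorem exists_eq_two_cons (hx : x < 2) (h : IsHJExpansionOf x b) :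
    ∃ t, b = 2 :: t ∧ IsHJExpansionOf (2 - x)⁻¹ t := by
  obtain ⟨b₁, t, rfl⟩ := List.exists_cons_of_ne_nil h.1
  have hb₁ := h.two_le_head
  have ht : t ≠ [] := by
    rintro rfl
    linarith [h.eq_of_singleton]
  have hb₁' : b₁ = 2 := by
    have : (b₁ : ℚ) < 3 := by linarith [(h.head_sub_one_lt_of_ne_nil ht).1]
    have : b₁ < 3 := by exact_mod_cast this
    have : 2 ≤ b₁ := by exact_mod_cast hb₁
    omega
  subst hb₁'
  exact ⟨t, rfl, by exact_mod_cast h.tail ht⟩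

end IsHJExpansionOf

theorem inv_add_inv_eq_one_iff {K : Type*} [Field K] {x y : K} (hx₀ : x ≠ 0) (hx₁ : x ≠ 1) :
    x⁻¹ + y⁻¹ = 1 ↔ y = x / (x - 1) := by
  have : x - 1 ≠ 0 := sub_ne_zero.2 hx₁
  constructor
  · intro h
    rw [← inv_inv y, eq_sub_of_add_eq' h]
    field_simp
  · rintro rfl
    field_simp
    ring

theorem sum_add_sum_of_two_lt {x y : ℚ} {b c : List ℤ} (hx : 2 < x) (hb : IsHJExpansionOf x b)
    (hc : IsHJExpansionOf y c) (hxy : x⁻¹ + y⁻¹ = 1)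
    (ih : ∀ {x' y' : ℚ} {b' c' : List ℤ}, IsHJExpansionOf x' b' → IsHJExpansionOf y' c' →
      x'⁻¹ + y'⁻¹ = 1 → b'.length + c'.length < b.length + c.length →
      b'.sum + c'.sum = 3 * (b'.length + c'.length : ℤ) - 2) :
    b.sum + c.sum = 3 * (b.length + c.length : ℤ) - 2 := by
  obtain ⟨b₁, tb, rfl⟩ := List.exists_cons_of_ne_nil hb.1
  have hx₁ := hb.one_lt
  rw [inv_add_inv_eq_one_iff (by positivity) hx₁.ne'] at hxy
  have hy : y < 2 := by
    rw [hxy, div_lt_iff₀ (by linarith)]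
    linarith
  obtain ⟨tc, rfl, htc⟩ := hc.exists_eq_two_cons hy
  have hdual : (x - 1)⁻¹ + ((2 - y)⁻¹)⁻¹ = 1 := by
    have : x - 1 ≠ 0 := by linarith
    rw [inv_inv, hxy]
    field_simp
    ring
  have := ih (hb.sub_one hx) htc hdual (by simp)
  simp only [List.sum_cons, List.length_cons] at this ⊢
  push_cast at this ⊢
  linarith

theorem sum_add_sum_eq_of_inv_add_inv_eq_one {x y : ℚ} {b c : List ℤ}
    (hb : IsHJExpansionOf x b) (hc : IsHJExpansionOf y c) (hxy : x⁻¹ + y⁻¹ = 1) :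
    b.sum + c.sum = 3 * (b.length + c.length : ℤ) - 2 := by
  induction hn : b.length + c.length using Nat.strong_induction_on generalizing x y b c with
  | _ n ih =>
  subst hn
  rcases lt_trichotomy x 2 with hx | rfl | hx
  · have hy : 2 < y := by
      have hy₁ := hc.one_lt
      rw [add_comm, inv_add_inv_eq_one_iff (by positivity) hy₁.ne'] at hxy
      rw [hxy, div_lt_iff₀ (by linarith)] at hx
      linarith
    have := sum_add_sum_of_two_lt hy hc hb (by rwa [add_comm])
      fun hb' hc' hxy' hlt => ih _ (by omega) hb' hc' hxy' rfl
    linarith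
  · have hy : y = 2 := by
      rw [inv_add_inv_eq_one_iff two_ne_zero (by norm_num)] at hxy
      norm_num [hxy]
    subst hy
    rw [(by exact_mod_cast hb : IsHJExpansionOf ((2 : ℤ) : ℚ) b).eq_singleton_of_eq_intCast,
      (by exact_mod_cast hc : IsHJExpansionOf ((2 : ℤ) : ℚ) c).eq_singleton_of_eq_intCast]
    norm_num
  · exact sum_add_sum_of_two_lt hx hb hc hxy fun hb' hc' hxy' hlt => ih _ hlt hb' hc' hxy' rfl

theorem Nat.dvd_add_of_mul_modEq_one_of_sub_mul_modEq_one {r a u v : ℕ} (har : a ≤ r)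
    (hu : a * u ≡ 1 [MOD r]) (hv : (r - a) * v ≡ 1 [MOD r]) : r ∣ u + v := by
  rw [← ZMod.natCast_eq_zero_iff]
  rw [← ZMod.natCast_eq_natCast_iff] at hu hv
  push_cast [Nat.cast_sub har, ZMod.natCast_self] at hu hv ⊢
  linear_combination (-(v : ZMod r)) * hu - (u : ZMod r) * hv

theorem betaT_eq (r a a' : ℕ) (b : List ℤ) :
    betaT r a a' b = 3 * b.length + 2 - b.sum - ((a : ℚ) + a' + 2) / r := by
  simp only [betaT, bind_pure_comp, List.map_eq_map, List.map_map]
  have sum_two_sub : ∀ l : List ℤ,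
      (l.map ((fun x => 2 - x) ∘ Int.cast)).sum = 2 * (l.length : ℚ) - l.sum := by
    intro l
    induction l with
    | nil => simp
    | cons z l ih =>
      simp only [List.map_cons, List.sum_cons, List.length_cons, ih, Function.comp_apply]
      push_cast
      ring
  rw [sum_two_sub]
  ring

theorem beta_pair_identity_general (r a : ℕ) (har : a < r)
    (a' : ℕ) (ha'1 : 1 ≤ a') (ha'r : a' < r) (ha' : a * a' ≡ 1 [MOD r])
    (a'' : ℕ) (ha''r : a'' < r) (ha'' : (r - a) * a'' ≡ 1 [MOD r])
    (b c : List ℤ) (hb : IsHJExpansion r a b) (hc : IsHJExpansion r (r - a) c) :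
    betaT r a a' b + betaT r (r - a) a'' c = 4 * (1 - 1 / (r : ℚ)) := by
  have hr : (r : ℚ) ≠ 0 := by exact_mod_cast (Nat.zero_lt_of_lt har).ne'
  have hdual : ((r : ℚ) / a)⁻¹ + ((r : ℚ) / (r - a : ℕ))⁻¹ = 1 := by
    rw [inv_div, inv_div, ← add_div, Nat.cast_sub har.le, add_sub_cancel, div_self hr]
  have hsum : (b.sum + c.sum : ℚ) = 3 * (b.length + c.length) - 2 := by
    exact_mod_cast sum_add_sum_eq_of_inv_add_inv_eq_one (isHJExpansion_iff.1 hb)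
      (isHJExpansion_iff.1 hc) hdual
  have hinv : (a' + a'' : ℚ) = r := by
    exact_mod_cast Nat.eq_of_dvd_of_lt_two_mul (by omega)
      (Nat.dvd_add_of_mul_modEq_one_of_sub_mul_modEq_one har.le ha' ha'') (by omega)
  rw [betaT_eq, betaT_eq, Nat.cast_sub har.le]
  field_simp
  linear_combination (-r) * hsum - hinv

theorem beta_pair_identity (r a : ℕ) (hr : 2 ≤ r) (ha : 1 ≤ a) (har : a < r)
    (hcop : Nat.Coprime a r)
    (a' : ℕ) (ha'1 : 1 ≤ a') (ha'r : a' < r) (ha' : a * a' ≡ 1 [MOD r])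
    (a'' : ℕ) (ha''1 : 1 ≤ a'') (ha''r : a'' < r) (ha'' : (r - a) * a'' ≡ 1 [MOD r])
    (b c : List ℤ) (hb : IsHJExpansion r a b) (hc : IsHJExpansion r (r - a) c) :
    betaT r a a' b + betaT r (r - a) a'' c = 4 * (1 - 1 / (r : ℚ)) :=
  beta_pair_identity_general r a har a' ha'1 ha'r ha' a'' ha''r ha'' b c hb hc
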